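/- arXiv:2109.09868 — 4 statements merged into one kernel-verified Lean document; each statement's English description precedes it below -/
import Mathlib

section
/- (Correctness of BW-type rational interpolation.) Let $r(x) = p(x)/q(x)$ with $\deg p, \deg q \le K-1$. Let $x_0, \dots, x_N$ be distinct points in a field and let $A \subseteq \{0,\dots,N\}$ with $|A| = N-S+1$ be the available indices. Suppose $y_i$ are given values with $y_i = r(x_i)$ (and $q(x_i) \neq 0$) for all $i$ in a subset $G \subseteq A$ with $|G| \ge N-S-E+1$. Suppose $P(x), Q(x)$ are polynomials of degree at most $K+E-1$ satisfying $P(x_i) = y_i Q(x_i)$ for all $i \in A$, with $Q \neq 0$. If $N \ge 2K+2E+S-1$, then $P(x)q(x) = Q(x)p(x)$, i.e., $P/Q = p/q$ as rational functions. -/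
/-!
At a good point `x_i` both `P(x_i) q(x_i)` and `Q(x_i) p(x_i)` equal `y_i Q(x_i) q(x_i)`, so
`P q - Q p` has more roots than its degree, at most `(K + E - 1) + (K - 1)`, allows.
-/

open Polynomial

theorem Polynomial.mul_eq_mul_of_eval_eq_mul {R ι : Type*} [CommRing R] [IsDomain R]
    {x : ι → R} (hx : Function.Injective x) (y : ι → R) {P Q p q : R[X]} {G : Finset ι}
    (hPQ : ∀ i ∈ G, P.eval (x i) = y i * Q.eval (x i))
    (hpq : ∀ i ∈ G, y i * q.eval (x i) = p.eval (x i))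
    (hdeg : max (P * q).natDegree (Q * p).natDegree < G.card) :
    P * q = Q * p :=
  eq_of_natDegree_lt_card_of_eval_eq _ _ (hx.comp (Subtype.val_injective (p := (· ∈ G))))
    (fun i ↦ by simp only [Function.comp_apply, eval_mul, hPQ i i.2, ← hpq i i.2]; ring)
    (by simpa using hdeg)

theorem stmt4_general {F : Type*} [Field F] (K E S N : ℕ)
    (x : Fin (N + 1) → F) (hx : Function.Injective x)
    (y : Fin (N + 1) → F)
    (p q P Q : F[X])
    (hp : p.natDegree ≤ K - 1) (hq : q.natDegree ≤ K - 1)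
    (hP : P.natDegree ≤ K + E - 1) (hQdeg : Q.natDegree ≤ K + E - 1)
    (A G : Finset (Fin (N + 1))) (hGA : G ⊆ A)
    (hG : N - S - E + 1 ≤ G.card)
    (hgood : ∀ i ∈ G, q.eval (x i) ≠ 0 ∧ y i * q.eval (x i) = p.eval (x i))
    (hPQ : ∀ i ∈ A, P.eval (x i) = y i * Q.eval (x i))
    (hN : 2 * K + 2 * E + S - 1 ≤ N) :
    P * q = Q * p := by
  refine mul_eq_mul_of_eval_eq_mul hx y (fun i hi ↦ hPQ i (hGA hi)) (fun i hi ↦ (hgood i hi).2) ?_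
  have : (P * q).natDegree ≤ _ := natDegree_mul_le.trans (add_le_add hP hq)
  have : (Q * p).natDegree ≤ _ := natDegree_mul_le.trans (add_le_add hQdeg hp)
  omega

/-- Correctness of BW-type rational interpolation: if `P,Q` of degree
`≤ K+E-1` satisfy `P(x_i) = y_i Q(x_i)` on all available indices, where the
values `y_i` agree with `r = p/q` (degrees `≤ K-1`) on at least `N-S-E+1`
indices, and `N ≥ 2K+2E+S-1`, then `P·q = Q·p`. -/
theorem stmt4 {F : Type*} [Field F] (K E S N : ℕ)
    (hK : 1 ≤ K) (hS : 1 ≤ S) (hSN : S ≤ N)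
    (x : Fin (N + 1) → F) (hx : Function.Injective x)
    (y : Fin (N + 1) → F)
    (p q P Q : F[X])
    (hp : p.natDegree ≤ K - 1) (hq : q.natDegree ≤ K - 1)
    (hP : P.natDegree ≤ K + E - 1) (hQdeg : Q.natDegree ≤ K + E - 1)
    (A G : Finset (Fin (N + 1))) (hGA : G ⊆ A)
    (hA : A.card = N - S + 1) (hG : N - S - E + 1 ≤ G.card)
    (hgood : ∀ i ∈ G, q.eval (x i) ≠ 0 ∧ y i * q.eval (x i) = p.eval (x i))
    (hPQ : ∀ i ∈ A, P.eval (x i) = y i * Q.eval (x i))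
    (hQ : Q ≠ 0)
    (hN : 2 * K + 2 * E + S - 1 ≤ N) :
    P * q = Q * p :=
  stmt4_general K E S N x hx y p q P Q hp hq hP hQdeg A G hGA hG hgood hPQ hN
end

section
/- (No poles on the real line for Berrut's interpolant.) For distinct real points $x_0 < x_1 < \cdots < x_n$, the denominator polynomial $D(x) = \sum_{i=0}^n (-1)^i \prod_{k \neq i} (x - x_k)$ of Berrut's rational interpolant has no real roots. -/
/-!
Away from the nodes, `D t = (∏ k, (t - x k)) * ∑ i, (-1) ^ i / (t - x i)`. If exactly the first
`m` nodes lie below `t`, the reciprocals `1 / (t - x i)` are positive and increasing for `i < m`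
and negative and increasing for `i ≥ m`. After multiplying by `(-1) ^ (m + 1)` and reading the
first block backwards, the sum becomes two alternating sums of positive decreasing terms; both are
nonnegative and at least one is nonempty, hence positive. At a node `x j` only the `j`-th summand
of `D` survives, and it is nonzero because the nodes are distinct.
-/

open Finset

section AlternatingSum

variable {R : Type*} [Ring R] [PartialOrder R] [IsOrderedRing R] {b : ℕ → R} {K : ℕ}

theorem sum_range_neg_one_pow_mul_pos (hK : 0 < K) (hpos : ∀ j < K, 0 < b j)
    (hanti : ∀ j, j + 1 < K → b (j + 1) < b j) : 0 < ∑ j ∈ range K, (-1) ^ j * b j := by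
  induction K using Nat.twoStepInduction generalizing b with
  | zero => omega
  | one => simpa using hpos 0 one_pos
  | more K ih _ =>
    have hpair : 0 < b 0 - b 1 := sub_pos.2 (hanti 0 (by omega))
    have htail : 0 ≤ ∑ j ∈ range K, (-1) ^ j * b (j + 2) := by
      rcases K.eq_zero_or_pos with rfl | hK
      · simp
      · exact (ih hK (fun j hj => hpos (j + 2) (by omega))
          (fun j hj => hanti (j + 2) (by omega))).le
    rw [sum_range_succ', sum_range_succ']
    simp only [pow_succ, pow_zero, mul_neg, mul_one, neg_mul, one_mul, neg_neg, zero_add]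
    rw [add_assoc, neg_add_eq_sub]
    exact add_pos_of_nonneg_of_pos htail hpair

theorem sum_range_neg_one_pow_mul_nonneg (hpos : ∀ j < K, 0 < b j)
    (hanti : ∀ j, j + 1 < K → b (j + 1) < b j) : 0 ≤ ∑ j ∈ range K, (-1) ^ j * b j := by
  rcases K.eq_zero_or_pos with rfl | hK
  · simp
  · exact (sum_range_neg_one_pow_mul_pos hK hpos hanti).le

end AlternatingSum

theorem MonotoneOn.exists_partitionPoint {R : Type*} [LinearOrder R] {y : ℕ → R} {N : ℕ}
    (hy : MonotoneOn y (Set.Iio N)) {t : R} (ht : ∀ i < N, y i ≠ t) :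
    ∃ m k, m + k = N ∧ (∀ i < m, y i < t) ∧ ∀ j < k, t < y (m + j) := by
  classical
  have hex : ∃ m, N ≤ m ∨ t < y m := ⟨N, Or.inl le_rfl⟩
  have hmN : Nat.find hex ≤ N := Nat.find_min' hex (Or.inl le_rfl)
  refine ⟨Nat.find hex, N - Nat.find hex, by omega, fun i hi => ?_, fun j hj => ?_⟩
  · have hi' := Nat.find_min hex hi
    rw [not_or, not_le, not_lt] at hi'
    exact hi'.2.lt_of_ne (ht i hi'.1)
  · rcases Nat.find_spec hex with h | h
    · omega
    · exact h.trans_le (hy (Set.mem_Iio.2 (by omega)) (Set.mem_Iio.2 (by omega)) (by omega))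

section InverseDistances

variable {R : Type*} [Field R] {y : ℕ → R} {t : R} {m k : ℕ}

theorem neg_one_pow_mul_sum_range_inv_sub :
    (-1) ^ (m + 1) * ∑ i ∈ range (m + k), (-1) ^ i * (t - y i)⁻¹ =
      ∑ j ∈ range m, (-1) ^ j * (t - y (m - 1 - j))⁻¹ +
        ∑ j ∈ range k, (-1) ^ j * (y (m + j) - t)⁻¹ := by
  rw [sum_range_add, mul_add, mul_sum, mul_sum, ← sum_range_reflect _ m]
  congr 1 <;> refine sum_congr rfl fun j hj => ?_ <;> rw [mem_range] at hj
  · rw [← mul_assoc, ← pow_add, show m + 1 + (m - 1 - j) = j + 2 * (m - j) by omega, pow_add,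
      pow_mul, neg_one_sq, one_pow, mul_one]
  · rw [← mul_assoc, ← pow_add, show m + 1 + (m + j) = j + 2 * m + 1 by omega, pow_succ,
      pow_add, pow_mul, neg_one_sq, one_pow, mul_one, ← neg_sub (y (m + j)), inv_neg]
    ring

variable [LinearOrder R] [IsStrictOrderedRing R]

theorem neg_one_pow_mul_sum_range_inv_sub_pos (hmk : 0 < m + k)
    (hy : StrictMonoOn y (Set.Iio (m + k))) (hleft : ∀ i < m, y i < t)
    (hright : ∀ j < k, t < y (m + j)) :
    0 < (-1) ^ (m + 1) * ∑ i ∈ range (m + k), (-1) ^ i * (t - y i)⁻¹ := by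
  have hlt {i j : ℕ} (hij : i < j) (hj : j < m + k) : y i < y j :=
    hy (Set.mem_Iio.2 (by omega)) (Set.mem_Iio.2 hj) hij
  have ha_pos : ∀ j < m, 0 < (t - y (m - 1 - j))⁻¹ :=
    fun j hj => inv_pos.2 (sub_pos.2 (hleft _ (by omega)))
  have ha_anti : ∀ j, j + 1 < m → (t - y (m - 1 - (j + 1)))⁻¹ < (t - y (m - 1 - j))⁻¹ :=
    fun j hj => (inv_lt_inv₀ (sub_pos.2 (hleft _ (by omega))) (sub_pos.2 (hleft _ (by omega)))).2
      (sub_lt_sub_left (hlt (by omega) (by omega)) t)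
  have hb_pos : ∀ j < k, 0 < (y (m + j) - t)⁻¹ := fun j hj => inv_pos.2 (sub_pos.2 (hright j hj))
  have hb_anti : ∀ j, j + 1 < k → (y (m + (j + 1)) - t)⁻¹ < (y (m + j) - t)⁻¹ :=
    fun j hj => (inv_lt_inv₀ (sub_pos.2 (hright _ hj)) (sub_pos.2 (hright j (by omega)))).2
      (sub_lt_sub_right (hlt (by omega) (by omega)) t)
  rw [neg_one_pow_mul_sum_range_inv_sub]
  rcases m.eq_zero_or_pos with hm | hm
  · exact add_pos_of_nonneg_of_pos (sum_range_neg_one_pow_mul_nonneg ha_pos ha_anti)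
      (sum_range_neg_one_pow_mul_pos (by omega) hb_pos hb_anti)
  · exact add_pos_of_pos_of_nonneg (sum_range_neg_one_pow_mul_pos hm ha_pos ha_anti)
      (sum_range_neg_one_pow_mul_nonneg hb_pos hb_anti)

end InverseDistances

open Fin.NatCast in
theorem sum_neg_one_pow_mul_inv_sub_ne_zero {R : Type*} [Field R] [LinearOrder R]
    [IsStrictOrderedRing R] {n : ℕ} {x : Fin (n + 1) → R} (hx : StrictMono x) {t : R}
    (ht : ∀ k, x k ≠ t) : ∑ i : Fin (n + 1), (-1) ^ (i : ℕ) * (t - x i)⁻¹ ≠ 0 := by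
  set y : ℕ → R := fun j => x (j : Fin (n + 1))
  have hsum : ∑ i : Fin (n + 1), (-1) ^ (i : ℕ) * (t - x i)⁻¹ =
      ∑ j ∈ range (n + 1), (-1) ^ j * (t - y j)⁻¹ := by
    simp only [y, ← Fin.sum_univ_eq_sum_range, Fin.cast_val_eq_self]
  have hy : StrictMonoOn y (Set.Iio (n + 1)) := fun i _ j hj hij =>
    hx (Fin.natCast_strictMono (Nat.lt_succ_iff.1 hj) hij)
  obtain ⟨m, k, hmk, hleft, hright⟩ := hy.monotoneOn.exists_partitionPoint fun i _ => ht _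
  rw [hsum]
  rw [← hmk] at hy ⊢
  exact right_ne_zero_of_mul
    (neg_one_pow_mul_sum_range_inv_sub_pos (by omega) hy hleft hright).ne'

section Barycentric

variable {ι R : Type*} [Fintype ι] [DecidableEq ι] [Field R] (w x : ι → R)

theorem sum_mul_prod_erase_sub_node (j : ι) :
    ∑ i, w i * ∏ k ∈ univ.erase i, (x j - x k) = w j * ∏ k ∈ univ.erase j, (x j - x k) :=
  sum_eq_single j (fun i _ hij => mul_eq_zero_of_right _
    (prod_eq_zero (mem_erase.2 ⟨hij.symm, mem_univ j⟩) (sub_self _))) (by simp)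

theorem sum_mul_prod_erase_sub_eq_prod_mul_sum_inv {t : R} (ht : ∀ k, x k ≠ t) :
    ∑ i, w i * ∏ k ∈ univ.erase i, (t - x k) = (∏ k, (t - x k)) * ∑ i, w i * (t - x i)⁻¹ := by
  rw [mul_sum]
  refine sum_congr rfl fun i _ => ?_
  rw [← mul_prod_erase univ _ (mem_univ i)]
  field_simp [sub_ne_zero.2 (ht i).symm]

end Barycentric

/-- No poles on the real line for Berrut's interpolant: the denominator
`D(x) = ∑ i (-1)^i ∏_{k≠i}(x - x_k)` has no real roots. -/
theorem stmt9 (n : ℕ) (x : Fin (n + 1) → ℝ) (hx : StrictMono x) :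
    ∀ t : ℝ,
      (∑ i : Fin (n + 1), (-1 : ℝ) ^ (i : ℕ) *
        ∏ k ∈ univ.erase i, (t - x k)) ≠ 0 := by
  intro t
  by_cases hnode : ∃ j, x j = t
  · obtain ⟨j, rfl⟩ := hnode
    rw [sum_mul_prod_erase_sub_node (fun i : Fin (n + 1) => (-1 : ℝ) ^ (i : ℕ))]
    exact mul_ne_zero (pow_ne_zero _ (by norm_num)) (prod_ne_zero_iff.2 fun k hk =>
      sub_ne_zero.2 (hx.injective.ne (mem_erase.1 hk).1.symm))
  · push Not at hnode
    rw [sum_mul_prod_erase_sub_eq_prod_mul_sum_inv (fun i : Fin (n + 1) => (-1 : ℝ) ^ (i : ℕ)) x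
      hnode]
    exact mul_ne_zero (prod_ne_zero_iff.2 fun k _ => sub_ne_zero.2 (hnode k).symm)
      (sum_neg_one_pow_mul_inv_sub_ne_zero hx hnode)
end

section
/- For $x$ strictly between consecutive nodes, i.e., $x_{j} < x < x_{j+1}$ for some $j$, the sum $\sum_{i=0}^n \frac{(-1)^i}{x - x_i}$ is nonzero. In fact, the terms can be paired so that the sum has the same sign as $(-1)^j$ (up to a fixed convention), hence is nonzero. -/
/-!
Multiply the sum by `(-1)^j`. The nodes left of `t` contribute an alternating sum of the positive
numbers `1 / (t - x i)`, which increase towards `i = j`, so that block has the sign of its last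
term; the nodes right of `t` contribute an alternating sum of the positive numbers
`1 / (x i - t)`, which decrease, so that block has the sign of its first term. After the factor
`(-1)^j` both blocks are positive.
-/

open Finset

section Alternating

variable {R : Type*} [Ring R] [LinearOrder R] [IsStrictOrderedRing R]

theorem alternating_sum_range_succ_mem_Ioc {a : ℕ → R} (m : ℕ) (hpos : ∀ k ≤ m, 0 < a k)
    (hanti : ∀ k < m, a (k + 1) < a k) :
    ∑ k ∈ range (m + 1), (-1) ^ k * a k ∈ Set.Ioc 0 (a 0) := by
  induction m generalizing a with
  | zero => simpa using hpos 0 le_rfl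
  | succ m ih =>
    obtain ⟨hS, hSle⟩ := ih (a := fun k => a (k + 1)) (fun k hk => hpos _ (by omega))
      (fun k hk => hanti _ (by omega))
    rw [sum_range_succ']
    simp only [pow_succ, mul_neg_one, neg_mul, sum_neg_distrib, pow_zero, one_mul, neg_add_eq_sub]
    exact ⟨sub_pos.2 (hSle.trans_lt (hanti 0 (by omega))), sub_le_self _ hS.le⟩

theorem neg_one_pow_mul_alternating_sum_range_succ_mem_Ioc {a : ℕ → R} (m : ℕ)
    (hpos : ∀ k ≤ m, 0 < a k) (hmono : ∀ k < m, a k < a (k + 1)) :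
    (-1) ^ m * ∑ k ∈ range (m + 1), (-1) ^ k * a k ∈ Set.Ioc 0 (a m) := by
  induction m with
  | zero => simpa using hpos 0 le_rfl
  | succ m ih =>
    obtain ⟨hS, hSle⟩ := ih (fun k hk => hpos _ (by omega)) (fun k hk => hmono _ (by omega))
    have hsq : ((-1) ^ (m + 1) * (-1) ^ (m + 1) : R) = 1 := by
      rw [← pow_add, Even.neg_one_pow ⟨m + 1, rfl⟩]
    rw [sum_range_succ, mul_add, ← mul_assoc, hsq, one_mul, pow_succ, mul_neg_one, neg_mul,
      neg_add_eq_sub]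
    exact ⟨sub_pos.2 (hSle.trans_lt (hmono m (by omega))), sub_le_self _ hS.le⟩

end Alternating

theorem neg_one_pow_mul_sum_alternating_inv_sub_pos {K : Type*} [Field K] [LinearOrder K]
    [IsStrictOrderedRing K] {y : ℕ → K} {n j : ℕ} {t : K}
    (hy : StrictMonoOn y (Set.Iic n)) (hj : j < n) (h1 : y j < t) (h2 : t < y (j + 1)) :
    0 < (-1) ^ j * ∑ i ∈ range (n + 1), (-1) ^ i / (t - y i) := by
  rw [show n + 1 = j + 1 + (n - j - 1 + 1) by omega, sum_range_add, mul_add]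
  refine add_pos ?left ?right
  case left =>
    have hlt : ∀ k ≤ j, y k < t := fun k hk =>
      (hy.monotoneOn (by simp; omega) (by simp; omega) hk).trans_lt h1
    simp only [div_eq_mul_inv]
    refine (neg_one_pow_mul_alternating_sum_range_succ_mem_Ioc j
      (fun k hk => inv_pos.2 (sub_pos.2 (hlt k hk))) fun k hk => ?_).1
    have hyk := hy (by simp; omega) (by simp; omega) (Nat.lt_succ_self k)
    have hyt := hlt (k + 1) hk
    gcongr
  case right =>
    have hgt : ∀ k ≤ n - j - 1, t < y (j + 1 + k) := fun k hk =>
      h2.trans_le (hy.monotoneOn (by simp; omega) (by simp; omega) (by omega))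
    have hterm : ∀ k, (-1 : K) ^ j * ((-1) ^ (j + 1 + k) / (t - y (j + 1 + k)))
        = (-1) ^ k * (y (j + 1 + k) - t)⁻¹ := fun k => by
      have hjj : (-1 : K) ^ j * (-1) ^ j = 1 := by rw [← pow_add, Even.neg_one_pow ⟨j, rfl⟩]
      rw [← neg_sub, div_neg, pow_add, pow_add]
      linear_combination (-1) ^ k * (y (j + 1 + k) - t)⁻¹ * hjj
    simp only [mul_sum, hterm]
    refine (alternating_sum_range_succ_mem_Ioc (n - j - 1)
      (fun k hk => inv_pos.2 (sub_pos.2 (hgt k hk))) fun k hk => ?_).1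
    have hyk := hy (by simp; omega) (by simp; omega) (show j + 1 + k < j + 1 + (k + 1) by omega)
    have hty := hgt k (by omega)
    gcongr

/-- For `x` strictly between consecutive nodes `x_j < x < x_{j+1}`, the sum
`∑ i (-1)^i / (x - x_i)` is nonzero. -/
theorem stmt10 (n : ℕ) (x : Fin (n + 1) → ℝ) (hx : StrictMono x)
    (j : ℕ) (hj : j + 1 ≤ n) (t : ℝ)
    (h1 : x ⟨j, by omega⟩ < t) (h2 : t < x ⟨j + 1, by omega⟩) :
    (∑ i : Fin (n + 1), (-1 : ℝ) ^ (i : ℕ) / (t - x i)) ≠ 0 := by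
  set y : ℕ → ℝ := fun i => x (Fin.clamp i n)
  have hclamp : ∀ i (hi : i < n + 1), Fin.clamp i n = ⟨i, hi⟩ := fun i hi =>
    Fin.ext (min_eq_left (by omega))
  have hy : StrictMonoOn y (Set.Iic n) := fun a ha b hb hab => by
    simp only [y, hclamp a (Nat.lt_succ_of_le ha), hclamp b (Nat.lt_succ_of_le hb)]
    exact hx hab
  have hsum : ∑ i : Fin (n + 1), (-1 : ℝ) ^ (i : ℕ) / (t - x i)
      = ∑ i ∈ range (n + 1), (-1) ^ i / (t - y i) := by
    rw [← Fin.sum_univ_eq_sum_range]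
    simp only [y, hclamp _ (Fin.is_lt _)]
  have hpos := neg_one_pow_mul_sum_alternating_inv_sub_pos hy hj
    (by simpa only [y, hclamp j (by omega)] using h1)
    (by simpa only [y, hclamp (j + 1) (by omega)] using h2)
  rw [hsum]
  exact right_ne_zero_of_mul hpos.ne'
end

section
/- (Error identifiability bound.) Let $r = p/q$ with $\deg p, \deg q \le K-1$ and suppose values $y_i$ at $M$ distinct points satisfy $y_i = r(x_i)$ except on a set of at most $E$ indices. If $M \ge 2K + 2E - 1$, then the rational function $r$ (as an equivalence class $p/q$) is uniquely determined by the data $(x_i, y_i)$: any other rational function $r' = p'/q'$ with degrees at most $K-1$ consistent with the data outside a set of at most $E$ indices must equal $r$. -/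
open Polynomial Finset

/-! Outside `B ∪ B'` both fractions fit the data, so `p q' - p' q` vanishes at the at least
`M - 2E ≥ 2K - 1` distinct points `x i` there, while its degree is at most `2K - 2`. -/

theorem Finset.card_le_card_compl_union_add {α : Type*} [Fintype α] [DecidableEq α]
    (B B' : Finset α) : Fintype.card α ≤ #(B ∪ B')ᶜ + #B + #B' := by
  have := card_union_le B B'
  rw [← card_compl_add_card (B ∪ B')]
  omega

theorem Polynomial.mul_eq_mul_of_eval_div_eq {R ι : Type*} [Field R] [Fintype ι] {f : ι → R}
    (hf : Function.Injective f) {p q p' q' : R[X]}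
    (hq : ∀ i, q.eval (f i) ≠ 0) (hq' : ∀ i, q'.eval (f i) ≠ 0)
    (heval : ∀ i, p.eval (f i) / q.eval (f i) = p'.eval (f i) / q'.eval (f i))
    (hcard : p.natDegree + q'.natDegree < Fintype.card ι)
    (hcard' : p'.natDegree + q.natDegree < Fintype.card ι) :
    p * q' = p' * q := by
  refine eq_of_natDegree_lt_card_of_eval_eq _ _ hf (fun i => ?_) ?_
  · simpa only [eval_mul, div_eq_div_iff (hq i) (hq' i)] using heval i
  · exact max_lt (natDegree_mul_le.trans_lt hcard) (natDegree_mul_le.trans_lt hcard')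

/-- Error identifiability bound: values `y_i` at `M ≥ 2K+2E-1` distinct
points determine a rational function of numerator/denominator degree at most
`K-1` uniquely, even if up to `E` of the values are corrupted: any two such
rational functions each consistent with the data outside at most `E` indices
must coincide. -/
theorem stmt16 {F : Type*} [Field F] (K E M : ℕ) (hK : 1 ≤ K)
    (hM : 2 * K + 2 * E - 1 ≤ M)
    (x : Fin M → F) (hx : Function.Injective x) (y : Fin M → F)
    (p q p' q' : F[X])
    (hp : p.natDegree ≤ K - 1) (hq : q.natDegree ≤ K - 1)
    (hp' : p'.natDegree ≤ K - 1) (hq' : q'.natDegree ≤ K - 1)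
    (hqne : ∀ i, q.eval (x i) ≠ 0) (hq'ne : ∀ i, q'.eval (x i) ≠ 0)
    (B B' : Finset (Fin M)) (hB : B.card ≤ E) (hB' : B'.card ≤ E)
    (hfit : ∀ i, i ∉ B → y i = p.eval (x i) / q.eval (x i))
    (hfit' : ∀ i, i ∉ B' → y i = p'.eval (x i) / q'.eval (x i)) :
    p * q' = p' * q := by
  classical
  have hS : 2 * K - 1 ≤ #(B ∪ B')ᶜ := by
    have := card_le_card_compl_union_add B B'
    rw [Fintype.card_fin] at this
    omega
  set S := (B ∪ B')ᶜ
  refine mul_eq_mul_of_eval_div_eq (f := fun i : S => x i) (hx.comp Subtype.val_injective)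
    (fun i => hqne i) (fun i => hq'ne i) (fun ⟨i, hi⟩ => ?_) ?_ ?_
  · simp only [S, mem_compl, mem_union, not_or] at hi
    rw [← hfit i hi.1, ← hfit' i hi.2]
  all_goals rw [Fintype.card_coe]; omega
end
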